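/- On V ⊗ V, defining (σ₁σ₂)^{ab} := Σ_c ξ_c (σ^{ac} ⊗ 1)(1 ⊗ σ^{c̄b}) (with graded tensor action), one has the symmetry relation (σ₂σ₁)^{ba} = (−1)^{[a][b]} (σ₁σ₂)^{ab}, where (σ₂σ₁)^{ba} := Σ_c ξ_c (1 ⊗ σ^{bc})(σ^{c̄a} ⊗ 1) with factors acting on the second and first tensor slots respectively. -/

import Mathlib

/-!
Reindex the left-hand sum by the involution `c ↦ c̄`; the two sides then agree term by term.
Graded antisymmetry turns `σ^{ca}` and `σ^{b c̄}` into `σ^{ac}` and `σ^{c̄ b}`, and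
`ξ_{c̄} = (−1)^{[c]} ξ_c` because `n` is even. The Koszul sign of the second-slot factor is
taken at the row index `p` on one side and at the column index `u` on the other; these agree
because `σ^{ac}` is homogeneous: its `(p, u)` entry vanishes unless `[p] + [u] = [a] + [c]`.
-/

open Matrix BigOperators

namespace OSP

variable (m n : ℕ)

/-- Z₂ grading (0-based index): [a] = 0 for the first m indices, 1 otherwise. -/
def gr (a : Fin (m + n)) : ℕ := if (a : ℕ) < m then 0 else 1

/-- Sign ξ_a : +1 on the first m + n/2 indices, −1 otherwise. -/
def xi (a : Fin (m + n)) : ℚ := if (a : ℕ) < m + n / 2 then 1 else -1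

/-- Conjugate index ā. -/
def conj (a : Fin (m + n)) : Fin (m + n) :=
  if h : (a : ℕ) < m then ⟨m - 1 - (a : ℕ), by omega⟩
  else ⟨2 * m + n - 1 - (a : ℕ), by have := a.isLt; omega⟩

/-- Metric g_{ab} = ξ_a δ_{a,b̄}. -/
def gmet (a b : Fin (m + n)) : ℚ := xi m n a * (if a = conj m n b then 1 else 0)

/-- Matrix unit e^{ab}. -/
def E (a b : Fin (m + n)) : Matrix (Fin (m + n)) (Fin (m + n)) ℚ :=
  fun p q => if p = a ∧ q = b then 1 else 0

/-- osp(m|n) generators σ^{ab} = Σ_k g_{ak} e^{kb} − (−1)^{[a][b]} Σ_k g_{bk} e^{ka}. -/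
def sg (a b : Fin (m + n)) : Matrix (Fin (m + n)) (Fin (m + n)) ℚ :=
  (∑ k, gmet m n a k • E m n k b)
    - ((-1 : ℚ) ^ (gr m n a * gr m n b)) • ∑ k, gmet m n b k • E m n k a

/-- Graded tensor product of operators on V ⊗ V: here d = degree of the second factor,
`(x ⊗ y)(v^r ⊗ v^s) = (−1)^{d·[r]} x v^r ⊗ y v^s`, written as a matrix on the product basis. -/
def gt (d : ℕ) (x y : Matrix (Fin (m + n)) (Fin (m + n)) ℚ) :
    Matrix (Fin (m + n) × Fin (m + n)) (Fin (m + n) × Fin (m + n)) ℚ :=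
  fun pq rs => ((-1 : ℚ) ^ (d * gr m n rs.1)) * x pq.1 rs.1 * y pq.2 rs.2

/-- σ^{ab} acting in the first tensor slot. -/
def sg1 (a b : Fin (m + n)) : Matrix (Fin (m + n) × Fin (m + n)) (Fin (m + n) × Fin (m + n)) ℚ :=
  gt m n 0 (sg m n a b) 1

/-- σ^{ab} acting in the second tensor slot (with Koszul sign, deg σ^{ab} = [a]+[b]). -/
def sg2 (a b : Fin (m + n)) : Matrix (Fin (m + n) × Fin (m + n)) (Fin (m + n) × Fin (m + n)) ℚ :=
  gt m n (gr m n a + gr m n b) 1 (sg m n a b)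

/-- Graded permutation: P(v^a ⊗ v^b) = (−1)^{[a][b]} v^b ⊗ v^a, as a matrix. -/
def Pop : Matrix (Fin (m + n) × Fin (m + n)) (Fin (m + n) × Fin (m + n)) ℚ :=
  fun pq ab => ((-1 : ℚ) ^ (gr m n ab.1 * gr m n ab.2)) *
    (if pq.1 = ab.2 ∧ pq.2 = ab.1 then 1 else 0)

/-- Q(v^a ⊗ v^b) = δ_{a,b̄} ξ_{ā} Σ_c ξ_c v^c ⊗ v^{c̄}, as a matrix. -/
def Qop : Matrix (Fin (m + n) × Fin (m + n)) (Fin (m + n) × Fin (m + n)) ℚ :=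
  fun pq ab => (if ab.1 = conj m n ab.2 then (1 : ℚ) else 0) * xi m n (conj m n ab.1) *
    (if pq.2 = conj m n pq.1 then xi m n pq.1 else 0)

/-- (σ₁σ₂)^{ab} = Σ_c ξ_c σ₁^{ac} σ₂^{c̄b}. -/
def S12 (a b : Fin (m + n)) : Matrix (Fin (m + n) × Fin (m + n)) (Fin (m + n) × Fin (m + n)) ℚ :=
  ∑ c, xi m n c • (sg1 m n a c * sg2 m n (conj m n c) b)

variable {m n}

lemma conj_involutive : Function.Involutive (conj m n) := by
  intro a
  have := a.isLt
  unfold conj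
  split_ifs with h₁ h₂ h₂ <;> simp only [Fin.ext_iff] at h₂ ⊢ <;> omega

lemma gr_conj (a : Fin (m + n)) : gr m n (conj m n a) = gr m n a := by
  have := a.isLt
  unfold gr conj
  split_ifs with h₁ h₂ h₂ <;> first | rfl | (simp only at h₂; omega)

lemma xi_conj (hn : Even n) (a : Fin (m + n)) :
    xi m n (conj m n a) = (-1 : ℚ) ^ gr m n a * xi m n a := by
  obtain ⟨k, rfl⟩ := hn
  have := a.isLt
  unfold xi gr conj
  split_ifs <;> simp only at * <;> first | omega | norm_num

lemma sum_gmet_smul_E_apply (a b p q : Fin (m + n)) :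
    (∑ k, gmet m n a k • E m n k b) p q = gmet m n a p * if q = b then 1 else 0 := by
  simp [Matrix.sum_apply, E, ite_and]

lemma sg_apply (a b p q : Fin (m + n)) :
    sg m n a b p q = gmet m n a p * (if q = b then 1 else 0)
      - (-1 : ℚ) ^ (gr m n a * gr m n b) * (gmet m n b p * if q = a then 1 else 0) := by
  simp [sg, sum_gmet_smul_E_apply]

lemma sg_swap (a b : Fin (m + n)) :
    sg m n b a = -(-1 : ℚ) ^ (gr m n a * gr m n b) • sg m n a b := by
  ext p q
  simp only [sg_apply, Matrix.smul_apply, smul_eq_mul, mul_comm (gr m n b)]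
  have hsign : (-1 : ℚ) ^ (gr m n a * gr m n b) * (-1) ^ (gr m n a * gr m n b) = 1 := by
    rw [← mul_pow]; norm_num
  linear_combination -(gmet m n b p * if q = a then 1 else 0) * hsign

lemma gr_add_gr_of_gmet_mul_ite_ne_zero {a b p q : Fin (m + n)}
    (h : (gmet m n a p * if q = b then 1 else 0) ≠ 0) :
    gr m n p + gr m n q = gr m n a + gr m n b := by
  obtain ⟨rfl, rfl, -⟩ := by simpa [gmet] using h
  rw [gr_conj]

lemma gr_add_gr_of_sg_apply_ne_zero {a b p q : Fin (m + n)} (h : sg m n a b p q ≠ 0) :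
    gr m n p + gr m n q = gr m n a + gr m n b := by
  rw [sg_apply] at h
  by_cases h₁ : (gmet m n a p * if q = b then 1 else 0) = 0
  · rw [h₁, zero_sub, neg_ne_zero] at h
    rw [gr_add_gr_of_gmet_mul_ite_ne_zero (right_ne_zero_of_mul h), add_comm]
  · exact gr_add_gr_of_gmet_mul_ite_ne_zero h₁

lemma gt_zero_one_mul_gt_one (d : ℕ) (x y : Matrix (Fin (m + n)) (Fin (m + n)) ℚ) :
    gt m n 0 x 1 * gt m n d 1 y = gt m n d x y := by
  ext ⟨p, q⟩ ⟨u, v⟩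
  simp only [Matrix.mul_apply, gt, zero_mul, pow_zero, one_mul, Matrix.one_apply, mul_ite,
    mul_one, mul_zero, ite_mul, Fintype.sum_prod_type, Finset.sum_ite_irrel, Finset.sum_ite_eq,
    Finset.mem_univ, ↓reduceIte, Finset.sum_const_zero, Finset.sum_ite_eq']
  ring

lemma gt_one_mul_gt_zero_one_apply (d : ℕ) (x y : Matrix (Fin (m + n)) (Fin (m + n)) ℚ)
    (p q u v : Fin (m + n)) :
    (gt m n d 1 y * gt m n 0 x 1) (p, q) (u, v) = (-1 : ℚ) ^ (d * gr m n p) * x p u * y q v := by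
  simp only [Matrix.mul_apply, gt, Matrix.one_apply, mul_ite, mul_one, mul_zero, ite_mul,
    zero_mul, pow_zero, one_mul, Fintype.sum_prod_type, Finset.sum_ite_eq', Finset.mem_univ,
    ↓reduceIte, Finset.sum_ite_eq]
  ring

lemma neg_one_pow_sign_identity {A B C P U : ℕ} (h : P + U = A + C) :
    (-1 : ℚ) ^ C * (-1) ^ (A * C) * (-1) ^ (C * B) * (-1) ^ ((B + C) * P)
      = (-1) ^ (A * B) * (-1) ^ ((C + B) * U) := by
  have hexp : C + A * C + C * B + (B + C) * P + 2 * ((B + C) * U)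
      = A * B + (C + B) * U + 2 * (A * C + B * C) + C * (C + 1) := by
    linear_combination (B + C) * h
  simpa only [pow_add, (even_two_mul _).neg_one_pow, (Nat.even_mul_succ_self C).neg_one_pow,
    mul_one] using congrArg ((-1 : ℚ) ^ ·) hexp

lemma xi_conj_smul_sg2_mul_sg1 (hn : Even n) (a b c : Fin (m + n)) :
    xi m n (conj m n c) • (sg2 m n b (conj m n c) * sg1 m n c a)
      = (-1 : ℚ) ^ (gr m n a * gr m n b) • xi m n c • (sg1 m n a c * sg2 m n (conj m n c) b) := by
  ext ⟨p, q⟩ ⟨u, v⟩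
  simp only [sg1, sg2, Matrix.smul_apply, smul_eq_mul, gt_one_mul_gt_zero_one_apply,
    gt_zero_one_mul_gt_one, gt]
  rw [xi_conj hn, gr_conj, sg_swap a c, sg_swap (conj m n c) b, gr_conj]
  by_cases h : sg m n a c p u = 0
  · simp [h]
  have hsign := neg_one_pow_sign_identity (B := gr m n b) (gr_add_gr_of_sg_apply_ne_zero h)
  simp only [Matrix.smul_apply, smul_eq_mul]
  linear_combination (xi m n c * sg m n a c p u * sg m n (conj m n c) b q v) * hsign

/-- (σ₂σ₁)^{ba} = (−1)^{[a][b]} (σ₁σ₂)^{ab}, where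
(σ₂σ₁)^{ba} = Σ_c ξ_c σ₂^{bc} σ₁^{c̄a} and (σ₁σ₂)^{ab} = Σ_c ξ_c σ₁^{ac} σ₂^{c̄b}. -/
theorem S21_eq_sign_S12 (m n : ℕ) (hn : Even n) (a b : Fin (m + n)) :
    (∑ c, xi m n c • (sg2 m n b c * sg1 m n (conj m n c) a))
      = ((-1 : ℚ) ^ (gr m n a * gr m n b)) • S12 m n a b := by
  calc ∑ c, xi m n c • (sg2 m n b c * sg1 m n (conj m n c) a)
      = ∑ c, xi m n (conj m n c) • (sg2 m n b (conj m n c) * sg1 m n c a) :=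
        (Fintype.sum_bijective _ conj_involutive.bijective _ _ fun c => by
          rw [conj_involutive]).symm
    _ = _ := by simp_rw [xi_conj_smul_sg2_mul_sg1 hn, S12, Finset.smul_sum]

end OSP
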